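/- arXiv:2602.16260 — 2 statements merged into one kernel-verified Lean document; each statement's English description precedes it below -/
import Mathlib

section
/- Let α, β, k > 0 and 0 < p < q with k·p < 1 and k·q > 1, let T_c > 0, and let γ := Γ((1−k·p)/(q−p)) · Γ((k·q−1)/(q−p)) / (α^k · Γ(k) · (q−p)) · (α/β)^((1−k·p)/(q−p)). Suppose V : ℝ → ℝ satisfies V(t) ≥ 0 for all t ≥ 0 and, for every t ≥ 0, V is differentiable at t with V'(t) ≤ −(γ/T_c) · (α·V(t)^p + β·V(t)^q)^k. Then V(t) = 0 for all t ≥ T_c. (Lyapunov-type differential inequality implying predefined-time convergence before the user-chosen time T_c.) -/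
/-!
If `V` stays positive on `[0, T]`, then `t ↦ ∫_{V T}^{V t} dv / g v + c t`, with
`g v = (α v^p + β v^q)^k` and `c = γ / T_c`, is nonincreasing, so
`c T ≤ ∫_{V T}^{V 0} dv / g v < ∫_0^∞ dv / g v`. The substitution `s = (β/α) v^(q-p)`
turns the last integral into the Beta integral
`∫_0^∞ s^(a-1) (1+s)^(-(a+b)) ds = Γ(a) Γ(b) / Γ(a+b)` with `a = (1 - k p)/(q - p)`,
`b = (k q - 1)/(q - p)`, and its value is exactly `γ = c T_c`.
So `V` cannot stay positive up to `T_c`, and once it reaches `0` it stays there.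
-/

open Real MeasureTheory Set

theorem integral_rpow_mul_one_sub_rpow {a b : ℝ} (ha : 0 < a) (hb : 0 < b) :
    ∫ x in (0:ℝ)..1, x ^ (a - 1) * (1 - x) ^ (b - 1) = Gamma a * Gamma b / Gamma (a + b) := by
  have hB : Complex.betaIntegral a b
      = ((∫ x in (0:ℝ)..1, x ^ (a - 1) * (1 - x) ^ (b - 1) : ℝ) : ℂ) := by
    rw [Complex.betaIntegral, ← intervalIntegral.integral_ofReal]
    refine intervalIntegral.integral_congr fun x hx => ?_
    rw [uIcc_of_le zero_le_one] at hx
    push_cast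
    rw [Complex.ofReal_cpow hx.1, Complex.ofReal_cpow (sub_nonneg.2 hx.2)]
    push_cast
    rfl
  have h := Complex.betaIntegral_eq_Gamma_mul_div a b (by simpa) (by simpa)
  rw [hB, ← Complex.ofReal_add, Complex.Gamma_ofReal, Complex.Gamma_ofReal,
    Complex.Gamma_ofReal] at h
  exact_mod_cast h

theorem integral_Ioi_rpow_mul_one_add_rpow_neg {a b : ℝ} (ha : 0 < a) (hb : 0 < b) :
    ∫ t in Ioi 0, t ^ (a - 1) * (1 + t) ^ (-(a + b)) = Gamma a * Gamma b / Gamma (a + b) := by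
  have himg : (fun x : ℝ => x / (1 - x)) '' Ioo 0 1 = Ioi 0 := by
    ext t
    constructor
    · rintro ⟨x, ⟨hx0, hx1⟩, rfl⟩
      exact div_pos hx0 (sub_pos.2 hx1)
    · intro (ht : 0 < t)
      refine ⟨t / (1 + t), ⟨by positivity, (div_lt_one (by positivity)).2 (by linarith)⟩,
        ?_⟩
      field_simp
      ring
  have hder (x : ℝ) (hx : x ∈ Ioo (0:ℝ) 1) :
      HasDerivWithinAt (fun x : ℝ => x / (1 - x)) ((1 - x) ^ 2)⁻¹ (Ioo 0 1) x := by
    have h1 : 1 - x ≠ 0 := (sub_pos.2 hx.2).ne'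
    refine (((hasDerivAt_id x).div ((hasDerivAt_const x 1).sub (hasDerivAt_id x)) h1).congr_deriv
      ?_).hasDerivWithinAt
    simp only [Pi.sub_apply, id]
    field_simp
    ring
  have hinj : InjOn (fun x : ℝ => x / (1 - x)) (Ioo 0 1) := by
    intro x hx y hy h
    have hx1 : 1 - x ≠ 0 := (sub_pos.2 hx.2).ne'
    have hy1 : 1 - y ≠ 0 := (sub_pos.2 hy.2).ne'
    field_simp at h
    linarith
  rw [← himg, integral_image_eq_integral_abs_deriv_smul measurableSet_Ioo hder hinj,
    ← integral_rpow_mul_one_sub_rpow ha hb, intervalIntegral.integral_of_le zero_le_one,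
    integral_Ioc_eq_integral_Ioo]
  refine setIntegral_congr_fun measurableSet_Ioo fun x ⟨hx0, hx1⟩ => ?_
  have h1 : 0 < 1 - x := sub_pos.2 hx1
  have hsplit : (1 - x) ^ (a + b) = (1 - x) ^ 2 * (1 - x) ^ (a - 1) * (1 - x) ^ (b - 1) := by
    rw [← rpow_natCast, ← rpow_add h1, ← rpow_add h1]
    ring_nf
  have hinv : 1 + x / (1 - x) = (1 - x)⁻¹ := by
    field_simp
    ring
  rw [smul_eq_mul, abs_of_pos (by positivity), hinv, div_rpow hx0.le h1.le,
    inv_rpow h1.le, rpow_neg h1.le, inv_inv, hsplit]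
  have : 0 < (1 - x) ^ (a - 1) := by positivity
  field_simp

theorem integral_Ioi_rpow_mul_one_add_mul_rpow_neg {a b c r : ℝ} (ha : 0 < a) (hb : 0 < b)
    (hc : 0 < c) (hr : 0 < r) :
    ∫ u in Ioi 0, u ^ (r * a - 1) * (1 + c * u ^ r) ^ (-(a + b))
      = c ^ (-a) / r * (Gamma a * Gamma b / Gamma (a + b)) := by
  set g : ℝ → ℝ := fun s => s ^ (a - 1) * (1 + c * s) ^ (-(a + b))
  have hpow : ∫ u in Ioi 0, u ^ (r * a - 1) * (1 + c * u ^ r) ^ (-(a + b))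
      = r⁻¹ * ∫ u in Ioi 0, (r * u ^ (r - 1)) • g (u ^ r) := by
    rw [← integral_const_mul]
    refine setIntegral_congr_fun measurableSet_Ioi fun u (hu : 0 < u) => ?_
    have : u ^ (r * a - 1) = u ^ (r - 1) * (u ^ r) ^ (a - 1) := by
      rw [← rpow_mul hu.le, ← rpow_add hu]
      ring_nf
    simp only [g, smul_eq_mul, this]
    field_simp
  have hscale : ∫ s in Ioi 0, g s
      = c ^ (1 - a) * ∫ s in Ioi 0, (c * s) ^ (a - 1) * (1 + c * s) ^ (-(a + b)) := by
    rw [← integral_const_mul]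
    refine setIntegral_congr_fun measurableSet_Ioi fun s (hs : 0 < s) => ?_
    rw [mul_rpow hc.le hs.le, ← mul_assoc, ← mul_assoc, ← rpow_add hc]
    simp [g]
  rw [hpow, integral_comp_rpow_Ioi_of_pos hr, hscale,
    integral_comp_mul_left_Ioi (fun t => t ^ (a - 1) * (1 + t) ^ (-(a + b))) 0 hc, mul_zero,
    integral_Ioi_rpow_mul_one_add_rpow_neg ha hb, smul_eq_mul, sub_eq_neg_add, rpow_add_one hc.ne']
  field_simp

theorem integral_Ioi_inv_mul_rpow_add_mul_rpow_rpow {α β k p q : ℝ}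
    (hα : 0 < α) (hβ : 0 < β) (hpq : p < q) (hkp : k * p < 1) (hkq : 1 < k * q) :
    ∫ u in Ioi 0, ((α * u ^ p + β * u ^ q) ^ k)⁻¹
      = Gamma ((1 - k * p) / (q - p)) * Gamma ((k * q - 1) / (q - p)) /
        (α ^ k * Gamma k * (q - p)) * (α / β) ^ ((1 - k * p) / (q - p)) := by
  set r := q - p
  set a := (1 - k * p) / r
  set b := (k * q - 1) / r
  have hr : 0 < r := sub_pos.2 hpq
  have hra : r * a - 1 = -(k * p) := by
    simp only [a]
    field_simp
    ring
  have hab : a + b = k := by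
    rw [← add_div, div_eq_iff hr.ne']
    ring
  have hfactor (u : ℝ) (hu : 0 < u) :
      ((α * u ^ p + β * u ^ q) ^ k)⁻¹
        = α ^ (-k) * (u ^ (r * a - 1) * (1 + β / α * u ^ r) ^ (-(a + b))) := by
    have hsplit : α * u ^ p + β * u ^ q = α * u ^ p * (1 + β / α * u ^ r) := by
      rw [show q = p + r by ring, rpow_add hu]
      field_simp
    rw [hsplit, hra, hab, ← rpow_neg (by positivity), mul_rpow (by positivity) (by positivity),
      mul_rpow hα.le (by positivity), ← rpow_mul hu.le, neg_mul_eq_mul_neg]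
    ring_nf
  rw [setIntegral_congr_fun measurableSet_Ioi hfactor, integral_const_mul,
    integral_Ioi_rpow_mul_one_add_mul_rpow_neg (div_pos (by linarith) hr)
      (div_pos (by linarith) hr) (div_pos hβ hα) hr, hab, rpow_neg (div_pos hβ hα).le,
    ← inv_rpow (div_pos hβ hα).le, inv_div, rpow_neg hα.le]
  field_simp
  ring

theorem mul_sub_le_intervalIntegral_inv_of_hasDerivAt {g V V' : ℝ → ℝ} {c a b : ℝ}
    (hab : a ≤ b) (hg : ContinuousOn g (Ioi 0)) (hg_pos : ∀ u, 0 < u → 0 < g u)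
    (hV_pos : ∀ t ∈ Icc a b, 0 < V t) (hV : ∀ t ∈ Icc a b, HasDerivAt V (V' t) t)
    (hV' : ∀ t ∈ Icc a b, V' t ≤ -c * g (V t)) :
    c * (b - a) ≤ ∫ u in V b..V a, (g u)⁻¹ := by
  have hg_inv : ContinuousOn (fun u => (g u)⁻¹) (Ioi 0) :=
    hg.inv₀ fun u hu => (hg_pos u hu).ne'
  have hVb := hV_pos b (right_mem_Icc.2 hab)
  have hG (v : ℝ) (hv : 0 < v) : HasDerivAt (fun v => ∫ u in V b..v, (g u)⁻¹) (g v)⁻¹ v :=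
    intervalIntegral.integral_hasDerivAt_right
      ((hg_inv.mono fun _ hx => (lt_min hVb hv).trans_le hx.1).intervalIntegrable)
      (hg_inv.stronglyMeasurableAtFilter isOpen_Ioi v hv) (hg_inv.continuousAt (Ioi_mem_nhds hv))
  set W : ℝ → ℝ := fun t => (∫ u in V b..V t, (g u)⁻¹) + c * t
  have hW (t : ℝ) (ht : t ∈ Icc a b) : HasDerivAt W ((g (V t))⁻¹ * V' t + c) t := by
    have := ((hG _ (hV_pos t ht)).comp t (hV t ht)).add ((hasDerivAt_id' t).const_mul c)
    rwa [mul_one] at this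
  have hW_anti : AntitoneOn W (Icc a b) := by
    refine antitoneOn_of_hasDerivWithinAt_nonpos (convex_Icc a b)
      (fun t ht => (hW t ht).continuousAt.continuousWithinAt)
      (fun t ht => (hW t (interior_subset ht)).hasDerivWithinAt) fun t ht => ?_
    have ht := interior_subset ht
    have hgV := hg_pos _ (hV_pos t ht)
    calc (g (V t))⁻¹ * V' t + c ≤ (g (V t))⁻¹ * (-c * g (V t)) + c := by
          gcongr
          exact hV' t ht
      _ = 0 := by field_simp; ring
  have := hW_anti (left_mem_Icc.2 hab) (right_mem_Icc.2 hab) hab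
  simp only [W, intervalIntegral.integral_same] at this
  linarith

theorem eq_zero_of_hasDerivAt_le_neg_mul {g V V' : ℝ → ℝ} {c T : ℝ}
    (hT : 0 ≤ T) (hc : 0 ≤ c)
    (hg : ContinuousOn g (Ioi 0)) (hg_pos : ∀ u, 0 < u → 0 < g u)
    (hg_nonneg : ∀ u, 0 ≤ u → 0 ≤ g u)
    (hint : IntegrableOn (fun u => (g u)⁻¹) (Ioi 0))
    (hint_le : ∫ u in Ioi 0, (g u)⁻¹ ≤ c * T)
    (hV_nonneg : ∀ t, 0 ≤ t → 0 ≤ V t) (hV : ∀ t, 0 ≤ t → HasDerivAt V (V' t) t)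
    (hV' : ∀ t, 0 ≤ t → V' t ≤ -c * g (V t)) :
    ∀ t, T ≤ t → V t = 0 := by
  have hV_anti : AntitoneOn V (Ici 0) :=
    antitoneOn_of_hasDerivWithinAt_nonpos (convex_Ici 0)
      (fun t ht => (hV t ht).continuousAt.continuousWithinAt)
      (fun t ht => (hV t (interior_subset ht)).hasDerivWithinAt) fun t ht => by
        have ht : 0 ≤ t := interior_subset ht
        nlinarith [hV' t ht, hg_nonneg _ (hV_nonneg t ht)]
  have hII (v : ℝ) (hv : 0 ≤ v) : IntervalIntegrable (fun u => (g u)⁻¹) volume 0 v :=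
    (intervalIntegrable_iff_integrableOn_Ioc_of_le hv).2 (hint.mono_set Ioc_subset_Ioi_self)
  suffices hVT : V T = 0 from fun t ht =>
    le_antisymm (hVT ▸ hV_anti hT (hT.trans ht) ht) (hV_nonneg t (hT.trans ht))
  by_contra hne
  have hVT : 0 < V T := (hV_nonneg T hT).lt_of_ne' hne
  have hV0 : 0 ≤ V 0 := hV_nonneg 0 le_rfl
  have hbound := mul_sub_le_intervalIntegral_inv_of_hasDerivAt hT hg hg_pos
    (fun t ht => hVT.trans_le (hV_anti ht.1 hT ht.2)) (fun t ht => hV t ht.1)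
    (fun t ht => hV' t ht.1)
  rw [sub_zero, ← intervalIntegral.integral_interval_sub_left (hII _ hV0) (hII _ hVT.le)]
    at hbound
  have h_le : ∫ u in 0..V 0, (g u)⁻¹ ≤ ∫ u in Ioi 0, (g u)⁻¹ := by
    rw [intervalIntegral.integral_of_le hV0]
    refine setIntegral_mono_set hint ?_ Ioc_subset_Ioi_self.eventuallyLE
    filter_upwards [ae_restrict_mem measurableSet_Ioi] with u hu using (inv_pos.2 (hg_pos u hu)).le
  have h_pos : 0 < ∫ u in 0..V T, (g u)⁻¹ :=
    intervalIntegral.intervalIntegral_pos_of_pos_on (hII _ hVT.le)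
      (fun u hu => inv_pos.2 (hg_pos u hu.1)) hVT
  linarith

theorem predefined_time_lyapunov_general
    (α β k p q : ℝ) (hα : 0 < α) (hβ : 0 < β) (hk : 0 < k)
    (hpq : p < q) (hkp : k * p < 1) (hkq : 1 < k * q)
    (Tc : ℝ) (hTc : 0 < Tc)
    (γ : ℝ)
    (hγ : γ = Real.Gamma ((1 - k * p) / (q - p)) * Real.Gamma ((k * q - 1) / (q - p)) /
        (α ^ k * Real.Gamma k * (q - p)) * (α / β) ^ ((1 - k * p) / (q - p)))
    (V : ℝ → ℝ)
    (hVnonneg : ∀ t : ℝ, 0 ≤ t → 0 ≤ V t)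
    (hVderiv : ∀ t : ℝ, 0 ≤ t → DifferentiableAt ℝ V t ∧
      deriv V t ≤ -(γ / Tc) * (α * (V t) ^ p + β * (V t) ^ q) ^ k) :
    ∀ t : ℝ, Tc ≤ t → V t = 0 := by
  have hr : 0 < q - p := sub_pos.2 hpq
  have hγ_pos : 0 < γ := by
    have := Gamma_pos_of_pos (div_pos (sub_pos.2 hkp) hr)
    have := Gamma_pos_of_pos (div_pos (sub_pos.2 hkq) hr)
    have := Gamma_pos_of_pos hk
    rw [hγ]
    positivity
  have hI := integral_Ioi_inv_mul_rpow_add_mul_rpow_rpow hα hβ hpq hkp hkq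
  rw [← hγ] at hI
  have hg : ContinuousOn (fun v : ℝ => (α * v ^ p + β * v ^ q) ^ k) (Ioi 0) := by
    intro v (hv : 0 < v)
    apply ContinuousAt.continuousWithinAt
    fun_prop (disch := first | exact Or.inl hv.ne' | exact Or.inl (by positivity))
  -- A non-integrable function has Bochner integral `0`, and `γ ≠ 0`.
  have hint := Integrable.of_integral_ne_zero (hI ▸ hγ_pos.ne')
  exact eq_zero_of_hasDerivAt_le_neg_mul hTc.le (by positivity) hg (fun u hu => by positivity)
    (fun u hu => by positivity) hint (by rw [hI, div_mul_cancel₀ γ hTc.ne'])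
    hVnonneg (fun t ht => (hVderiv t ht).1.hasDerivAt) (fun t ht => (hVderiv t ht).2)

/-- Lyapunov-type differential inequality implying predefined-time convergence:
if `V ≥ 0` and `V' ≤ -(γ/T_c) (α V^p + β V^q)^k` for `t ≥ 0`, then `V` vanishes
for all `t ≥ T_c`. -/
theorem predefined_time_lyapunov
    (α β k p q : ℝ) (hα : 0 < α) (hβ : 0 < β) (hk : 0 < k)
    (hp : 0 < p) (hpq : p < q) (hkp : k * p < 1) (hkq : 1 < k * q)
    (Tc : ℝ) (hTc : 0 < Tc)
    (γ : ℝ)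
    (hγ : γ = Real.Gamma ((1 - k * p) / (q - p)) * Real.Gamma ((k * q - 1) / (q - p)) /
        (α ^ k * Real.Gamma k * (q - p)) * (α / β) ^ ((1 - k * p) / (q - p)))
    (V : ℝ → ℝ)
    (hVnonneg : ∀ t : ℝ, 0 ≤ t → 0 ≤ V t)
    (hVderiv : ∀ t : ℝ, 0 ≤ t → DifferentiableAt ℝ V t ∧
      deriv V t ≤ -(γ / Tc) * (α * (V t) ^ p + β * (V t) ^ q) ^ k) :
    ∀ t : ℝ, Tc ≤ t → V t = 0 :=
  predefined_time_lyapunov_general α β k p q hα hβ hk hpq hkp hkq Tc hTc γ hγ V hVnonneg hVderiv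
end

section
/- Let α₁, β₁, T > 0 and set γ₁ := Γ(1/4)² / (2·α₁^{1/2}·Γ(1/2)) · (α₁/β₁)^{1/4}. If x : ℝ → ℝ satisfies, for every t ≥ 0, that x is differentiable at t with derivative x'(t) = −(γ₁/T)·(α₁·|x(t)| + β₁·|x(t)|³)^{1/2}·sign(x(t)), then x(t) = 0 for every t ≥ T. (Predefined-time convergence of the reduced sliding-mode dynamics of the fixed-time tracking controller, with settling time at most the user-chosen time T.) -/
/-!
Write `φ u = (α₁ u + β₁ u³)^{1/2}`. Away from zero, `|x|` solves the separable equation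
`|x|' = -(γ₁/T) φ(|x|)`, so while `x` does not vanish on `[0, T]` the elapsed time satisfies
`(γ₁/T) T = ∫_{|x T|}^{|x 0|} du / φ(u) < ∫_0^∞ du / φ(u)`. The substitutions `u = √(α₁/β₁) s`,
`s = √t` and `t = w/(1 - w)` turn the last integral into `B(1/4, 1/4) / (2 α₁^{1/2}) (α₁/β₁)^{1/4}`,
which is exactly `γ₁`; hence `x` vanishes somewhere in `[0, T]`. Finally `(x²)' = 2 x x' ≤ 0`,
so once `x` vanishes it stays zero.
-/

open Real Set MeasureTheory

theorem integral_Ioo_rpow_mul_one_sub_rpow {a b : ℝ} (ha : 0 < a) (hb : 0 < b) :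
    ∫ w in Ioo (0 : ℝ) 1, w ^ (a - 1) * (1 - w) ^ (b - 1) = Gamma a * Gamma b / Gamma (a + b) := by
  have hbeta := Complex.betaIntegral_eq_Gamma_mul_div a b (by simpa) (by simpa)
  rw [Complex.betaIntegral, intervalIntegral.integral_of_le zero_le_one,
    integral_Ioc_eq_integral_Ioo, ← Complex.ofReal_add, Complex.Gamma_ofReal,
    Complex.Gamma_ofReal, Complex.Gamma_ofReal] at hbeta
  apply Complex.ofReal_injective
  push_cast
  rw [← hbeta, ← integral_complex_ofReal]
  refine setIntegral_congr_fun measurableSet_Ioo fun w ⟨hw0, hw1⟩ => ?_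
  push_cast
  rw [Complex.ofReal_cpow hw0.le, Complex.ofReal_cpow (by linarith)]
  push_cast
  rfl

theorem integral_Ioi_rpow_mul_one_add_rpow (a b : ℝ) :
    ∫ t in Ioi (0 : ℝ), t ^ (a - 1) * (1 + t) ^ (-(a + b)) =
      ∫ w in Ioo (0 : ℝ) 1, w ^ (a - 1) * (1 - w) ^ (b - 1) := by
  have himage : (fun w : ℝ => w / (1 - w)) '' Ioo 0 1 = Ioi 0 := by
    ext t
    refine ⟨fun ⟨w, ⟨hw0, hw1⟩, hwt⟩ => hwt ▸ div_pos hw0 (sub_pos.2 hw1), fun ht => ?_⟩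
    have ht : (0 : ℝ) < t := ht
    refine ⟨t / (1 + t), ⟨by positivity, (div_lt_one (by positivity)).2 (by linarith)⟩, ?_⟩
    field_simp
    ring
  have hderiv : ∀ w ∈ Ioo (0 : ℝ) 1,
      HasDerivWithinAt (fun w => w / (1 - w)) ((1 - w) ^ 2)⁻¹ (Ioo 0 1) w := by
    intro w ⟨_, hw1⟩
    refine (((hasDerivAt_id w).div ((hasDerivAt_id w).const_sub 1)
      (sub_pos.2 hw1).ne').hasDerivWithinAt).congr_deriv ?_
    simp
  have hinj : InjOn (fun w : ℝ => w / (1 - w)) (Ioo 0 1) := by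
    intro v ⟨_, hv1⟩ w ⟨_, hw1⟩ h
    field_simp [(sub_pos.2 hv1).ne', (sub_pos.2 hw1).ne'] at h
    linarith
  rw [← himage, integral_image_eq_integral_abs_deriv_smul measurableSet_Ioo hderiv hinj]
  refine setIntegral_congr_fun measurableSet_Ioo fun w ⟨hw0, hw1⟩ => ?_
  have hv : 0 < 1 - w := sub_pos.2 hw1
  have hsum : 1 + w / (1 - w) = (1 - w)⁻¹ := by field_simp; ring
  rw [smul_eq_mul, abs_of_pos (by positivity), hsum, div_rpow hw0.le hv.le,
    inv_rpow hv.le, rpow_neg hv.le, inv_inv]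
  rw [show (1 - w) ^ (b - 1) = (1 - w) ^ (a + b) / (1 - w) ^ (a - 1) / (1 - w) ^ (2 : ℝ) by
    rw [← rpow_sub hv, ← rpow_sub hv]; ring_nf, rpow_two]
  ring

theorem integral_Ioi_inv_sqrt_add_cube :
    ∫ s in Ioi (0 : ℝ), ((s + s ^ 3) ^ (1 / 2 : ℝ))⁻¹ =
      Gamma (1 / 4) ^ 2 / (2 * Gamma (1 / 2)) := by
  have hsub : ∀ t ∈ Ioi (0 : ℝ), ((1 / 2 : ℝ) * t ^ ((1 / 2 : ℝ) - 1)) •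
      ((t ^ (1 / 2 : ℝ) + (t ^ (1 / 2 : ℝ)) ^ 3) ^ (1 / 2 : ℝ))⁻¹ =
        1 / 2 * (t ^ ((1 / 4 : ℝ) - 1) * (1 + t) ^ (-((1 / 4 : ℝ) + 1 / 4))) := by
    intro t (ht : 0 < t)
    have hcube : t ^ (1 / 2 : ℝ) + (t ^ (1 / 2 : ℝ)) ^ 3 = t ^ (1 / 2 : ℝ) * (1 + t) := by
      rw [← sqrt_eq_rpow, pow_succ, sq_sqrt ht.le]
      ring
    rw [smul_eq_mul, hcube, mul_rpow (by positivity) (by positivity), ← rpow_mul ht.le, mul_inv,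
      show (1 / 4 : ℝ) - 1 = (1 / 2 - 1) - 1 / 2 * (1 / 2) by norm_num,
      rpow_sub ht (1 / 2 - 1) (1 / 2 * (1 / 2)),
      show -((1 / 4 : ℝ) + 1 / 4) = -(1 / 2) by norm_num, rpow_neg (by positivity)]
    ring
  rw [← integral_comp_rpow_Ioi_of_pos (p := 1 / 2) (by norm_num),
    setIntegral_congr_fun measurableSet_Ioi hsub,
    integral_const_mul, integral_Ioi_rpow_mul_one_add_rpow,
    integral_Ioo_rpow_mul_one_sub_rpow (by norm_num) (by norm_num)]
  norm_num
  ring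

theorem integral_Ioi_inv_sqrt_mul_add_mul_cube {α β : ℝ} (hα : 0 < α) (hβ : 0 < β) :
    ∫ u in Ioi (0 : ℝ), ((α * u + β * u ^ (3 : ℝ)) ^ (1 / 2 : ℝ))⁻¹ =
      Gamma (1 / 4) ^ 2 / (2 * α ^ (1 / 2 : ℝ) * Gamma (1 / 2)) * (α / β) ^ (1 / 4 : ℝ) := by
  set c := √(α / β) with hc_def
  have hc : 0 < c := sqrt_pos.2 (div_pos hα hβ)
  have hscale : ∀ s ∈ Ioi (0 : ℝ), ((α * (c * s) + β * (c * s) ^ (3 : ℝ)) ^ (1 / 2 : ℝ))⁻¹ =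
      ((α * c) ^ (1 / 2 : ℝ))⁻¹ * ((s + s ^ 3) ^ (1 / 2 : ℝ))⁻¹ := by
    intro s (hs : 0 < s)
    have hc2 : β * c ^ 2 = α := by rw [sq_sqrt (div_pos hα hβ).le]; field_simp
    rw [rpow_ofNat, show α * (c * s) + β * (c * s) ^ 3 = (α * c) * (s + s ^ 3) by
      linear_combination (c * s ^ 3) * hc2, mul_rpow (by positivity) (by positivity), mul_inv]
  have hroot : c ^ (1 / 2 : ℝ) = (α / β) ^ (1 / 4 : ℝ) := by
    rw [hc_def, sqrt_eq_rpow, ← rpow_mul (div_pos hα hβ).le]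
    norm_num
  have hc_sq : c = (c ^ (1 / 2 : ℝ)) ^ 2 := by
    rw [← sqrt_eq_rpow, sq_sqrt hc.le]
  rw [show Ioi (0 : ℝ) = Ioi (c * 0) by rw [mul_zero], ← integral_comp_mul_left_Ioi' _ 0 hc,
    smul_eq_mul, setIntegral_congr_fun measurableSet_Ioi hscale, integral_const_mul,
    integral_Ioi_inv_sqrt_add_cube, mul_rpow hα.le hc.le, ← hroot]
  nth_rewrite 1 [hc_sq]
  have := (rpow_pos_of_pos hc (1 / 2 : ℝ)).ne'
  field_simp

section SeparableODE

variable {φ z : ℝ → ℝ} {k a b : ℝ}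

theorem integral_inv_eq_mul_sub_of_hasDerivAt (hφ : ContinuousOn φ (Ioi 0))
    (hφ_ne : ∀ u, 0 < u → φ u ≠ 0) (hab : a ≤ b)
    (hz : ∀ t ∈ Icc a b, HasDerivAt z (-k * φ (z t)) t) (hz_pos : ∀ t ∈ Icc a b, 0 < z t) :
    ∫ u in z b..z a, (φ u)⁻¹ = k * (b - a) := by
  have hzc : ContinuousOn z (Icc a b) := fun t ht => (hz t ht).continuousAt.continuousWithinAt
  have hmaps : MapsTo z (Icc a b) (Ioi 0) := hz_pos
  have hsubst := intervalIntegral.integral_comp_mul_deriv' (g := fun u => (φ u)⁻¹)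
    (fun t ht => hz t (by rwa [uIcc_of_le hab] at ht))
    (by rw [uIcc_of_le hab]; exact continuousOn_const.mul (hφ.comp hzc hmaps))
    ((hφ.inv₀ hφ_ne).mono (by rw [uIcc_of_le hab]; exact hmaps.image_subset))
  rw [intervalIntegral.integral_symm, ← hsubst, intervalIntegral.integral_congr (g := fun _ => -k)]
  · simp [mul_comm]
  · intro t ht
    rw [uIcc_of_le hab] at ht
    simp only [Function.comp_apply]
    field_simp [hφ_ne _ (hz_pos t ht)]

theorem mul_sub_lt_integral_inv_of_hasDerivAt (hφ : ContinuousOn φ (Ioi 0))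
    (hφ_pos : ∀ u, 0 < u → 0 < φ u) (hφ_int : IntegrableOn (fun u => (φ u)⁻¹) (Ioi 0))
    (hab : a ≤ b) (hz : ∀ t ∈ Icc a b, HasDerivAt z (-k * φ (z t)) t)
    (hz_pos : ∀ t ∈ Icc a b, 0 < z t) :
    k * (b - a) < ∫ u in Ioi 0, (φ u)⁻¹ := by
  have hint : ∀ v, 0 ≤ v → IntervalIntegrable (fun u => (φ u)⁻¹) volume 0 v := fun v hv =>
    (intervalIntegrable_iff_integrableOn_Ioc_of_le hv).2 (hφ_int.mono_set Ioc_subset_Ioi_self)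
  have ha := hz_pos a (left_mem_Icc.2 hab)
  have hb := hz_pos b (right_mem_Icc.2 hab)
  have hpos : 0 < ∫ u in (0 : ℝ)..z b, (φ u)⁻¹ :=
    intervalIntegral.intervalIntegral_pos_of_pos_on (hint _ hb.le)
      (fun u hu => inv_pos.2 (hφ_pos u hu.1)) hb
  have hle : ∫ u in (0 : ℝ)..z a, (φ u)⁻¹ ≤ ∫ u in Ioi 0, (φ u)⁻¹ := by
    rw [intervalIntegral.integral_of_le ha.le]
    exact setIntegral_mono_set hφ_int
      ((ae_restrict_mem measurableSet_Ioi).mono fun u hu => (inv_pos.2 (hφ_pos u hu)).le)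
      Ioc_subset_Ioi_self.eventuallyLE
  rw [← integral_inv_eq_mul_sub_of_hasDerivAt hφ (fun u hu => (hφ_pos u hu).ne') hab hz hz_pos,
    ← intervalIntegral.integral_interval_sub_left (hint _ ha.le) (hint _ hb.le)]
  linarith

end SeparableODE

theorem HasDerivAt.abs_of_mul_sign {x : ℝ → ℝ} {c t : ℝ} (hx : HasDerivAt x (c * Real.sign (x t)) t)
    (ht : x t ≠ 0) : HasDerivAt (fun s => |x s|) c t := by
  rcases ht.lt_or_gt with hneg | hpos
  · exact ((hasDerivAt_abs_neg hneg).comp t hx).congr_deriv (by simp [Real.sign_of_neg hneg])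
  · exact ((hasDerivAt_abs_pos hpos).comp t hx).congr_deriv (by simp [Real.sign_of_pos hpos])

theorem antitoneOn_sq_of_hasDerivAt_mul_sign {x c : ℝ → ℝ} {s : Set ℝ} (hs : Convex ℝ s)
    (hx : ∀ t ∈ s, HasDerivAt x (c t * Real.sign (x t)) t) (hc : ∀ t ∈ s, c t ≤ 0) :
    AntitoneOn (fun t => x t ^ 2) s := by
  have hsq : ∀ t ∈ s, HasDerivAt (fun t => x t ^ 2) (2 * c t * (Real.sign (x t) * x t)) t :=
    fun t ht => ((hx t ht).pow 2).congr_deriv (by ring)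
  refine antitoneOn_of_hasDerivWithinAt_nonpos hs
    (fun t ht => (hsq t ht).continuousAt.continuousWithinAt)
    (fun t ht => (hsq t (interior_subset ht)).hasDerivWithinAt) fun t ht =>
      mul_nonpos_of_nonpos_of_nonneg (by linarith [hc t (interior_subset ht)])
        (Real.sign_mul_nonneg (x t))

/-- Predefined-time convergence of the reduced sliding-mode dynamics
`ẋ = -(γ₁/T)(α₁|x| + β₁|x|³)^{1/2} sign(x)`, with settling time at most the
user-chosen time `T`. -/
theorem reduced_sliding_dynamics_predefined_time
    (α₁ β₁ T : ℝ) (hα₁ : 0 < α₁) (hβ₁ : 0 < β₁) (hT : 0 < T)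
    (γ₁ : ℝ)
    (hγ₁ : γ₁ = Real.Gamma (1 / 4) ^ 2 / (2 * α₁ ^ ((1 : ℝ) / 2) * Real.Gamma (1 / 2)) *
        (α₁ / β₁) ^ ((1 : ℝ) / 4))
    (x : ℝ → ℝ)
    (hx : ∀ t : ℝ, 0 ≤ t →
      HasDerivAt x
        (-(γ₁ / T) * (α₁ * |x t| + β₁ * |x t| ^ (3 : ℝ)) ^ ((1 : ℝ) / 2) * Real.sign (x t)) t) :
    ∀ t : ℝ, T ≤ t → x t = 0 := by
  set φ : ℝ → ℝ := fun u => (α₁ * u + β₁ * u ^ (3 : ℝ)) ^ ((1 : ℝ) / 2)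
  have hφ_cont : Continuous φ := by fun_prop (disch := norm_num)
  have hφ_pos : ∀ u, 0 < u → 0 < φ u := fun u hu => rpow_pos_of_pos (by positivity) _
  have hγ : ∫ u in Ioi 0, (φ u)⁻¹ = γ₁ := by
    rw [hγ₁]
    exact integral_Ioi_inv_sqrt_mul_add_mul_cube hα₁ hβ₁
  have hγ_pos : 0 < γ₁ := by
    rw [hγ₁]
    positivity
  -- A non-integrable function has Bochner integral `0`, and this one has integral `γ₁ > 0`.
  have hφ_int : IntegrableOn (fun u => (φ u)⁻¹) (Ioi 0) :=
    Integrable.of_integral_ne_zero (hγ ▸ hγ_pos.ne')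
  have hanti : AntitoneOn (fun t => x t ^ 2) (Ici 0) :=
    antitoneOn_sq_of_hasDerivAt_mul_sign (convex_Ici 0) hx fun t _ =>
      mul_nonpos_of_nonpos_of_nonneg (neg_nonpos.2 (by positivity)) (rpow_nonneg (by positivity) _)
  intro t ht
  by_contra hxt
  have hne : ∀ s ∈ Icc 0 T, x s ≠ 0 := by
    intro s ⟨hs0, hsT⟩ hxs
    have hsq : x t ^ 2 ≤ x s ^ 2 := hanti hs0 (hs0.trans (hsT.trans ht)) (hsT.trans ht)
    exact hxt (by simpa [hxs] using hsq)
  have := mul_sub_lt_integral_inv_of_hasDerivAt (z := fun s => |x s|) (k := γ₁ / T)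
    hφ_cont.continuousOn hφ_pos hφ_int hT.le (fun s hs => (hx s hs.1).abs_of_mul_sign (hne s hs))
    (fun s hs => abs_pos.2 (hne s hs))
  rw [hγ, sub_zero, div_mul_cancel₀ _ hT.ne'] at this
  exact this.false
end
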